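/- Define f(n) := 12·n² + 24·n·2^{⌊log₂(n−1)⌋} − 16·4^{⌊log₂(n−1)⌋} − 4 for integers n ≥ 2. Then for every integer n ≥ 2, f(2n+1) = 2·f(n) + 2·f(n+1). -/
import Mathlib


/-- f(n) = 12·n² + 24·n·2^{⌊log₂(n−1)⌋} − 16·4^{⌊log₂(n−1)⌋} − 4.
Here ⌊log₂ m⌋ is `Nat.log 2 m`, the largest k with 2^k ≤ m (for m ≥ 1). -/
def f (n : ℕ) : ℤ :=
  12 * (n : ℤ) ^ 2 + 24 * (n : ℤ) * 2 ^ (Nat.log 2 (n - 1))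
    - 16 * 4 ^ (Nat.log 2 (n - 1)) - 4

/-- For every integer n ≥ 2, f(2n+1) = 2·f(n) + 2·f(n+1). -/
theorem f_odd (n : ℕ) (hn : 2 ≤ n) : f (2 * n + 1) = 2 * f n + 2 * f (n + 1) := by
  obtain ⟨k, hk⟩ : ∃ k, Nat.log 2 n = k := ⟨_, rfl⟩
  have hpow : 2 ^ k ≤ n := hk ▸ Nat.pow_log_le_self 2 (by omega)
  have hlt : n < 2 ^ (k + 1) := hk ▸ Nat.lt_pow_succ_log_self (by norm_num) n
  have h1 : Nat.log 2 (2 * n + 1 - 1) = k + 1 := by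
    have h : 2 * n + 1 - 1 = n * 2 := by omega
    rw [h, Nat.log_mul_base (by norm_num) (by omega), hk]
  have h2 : Nat.log 2 (n + 1 - 1) = k := by simpa using hk
  by_cases hcase : n = 2 ^ k
  · have hk1 : 1 ≤ k := by
      rcases Nat.eq_zero_or_pos k with h | h
      · simp [h] at hcase; omega
      · exact h
    obtain ⟨j, rfl⟩ : ∃ j, k = j + 1 := ⟨k - 1, by omega⟩
    have h3 : Nat.log 2 (n - 1) = j := by
      apply Nat.log_eq_of_pow_le_of_lt_pow
      · have : 2 ^ j < 2 ^ (j + 1) := by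
          exact Nat.pow_lt_pow_right (by norm_num) (by omega)
        omega
      · omega
    simp only [f, h1, h2, h3]
    have h4 : ∀ m : ℕ, (4 : ℤ) ^ m = ((2 : ℤ) ^ m) ^ 2 := by
      intro m
      rw [show (4 : ℤ) = 2 ^ 2 by norm_num, ← pow_mul, mul_comm, pow_mul]
    rw [h4 j, h4 (j + 1), h4 (j + 1 + 1)]
    have e1 : (2 : ℤ) ^ (j + 1) = 2 * 2 ^ j := by ring
    have e2 : (2 : ℤ) ^ (j + 1 + 1) = 4 * 2 ^ j := by ring
    rw [e1, e2]
    push_cast [hcase]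
    ring
  · have h3 : Nat.log 2 (n - 1) = k := by
      apply Nat.log_eq_of_pow_le_of_lt_pow <;> omega
    simp only [f, h1, h2, h3]
    have h4 : ∀ m : ℕ, (4 : ℤ) ^ m = ((2 : ℤ) ^ m) ^ 2 := by
      intro m
      rw [show (4 : ℤ) = 2 ^ 2 by norm_num, ← pow_mul, mul_comm, pow_mul]
    rw [h4 k, h4 (k + 1)]
    have e1 : (2 : ℤ) ^ (k + 1) = 2 * 2 ^ k := by ring
    rw [e1]
    push_cast
    ring
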